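/- Define V_zero : ℝ² × ℝ⁷ → ℝ by V_zero(x₁, x₂; p₁, q₁, p₂, q₂, q₃, p₄, q₄) = 45·(1−x₁) + 5·x₁ + 50·x₂ + (90·x₁ − 45·(1−x₁))·p₁ + (10·(1−x₁) − 5·x₁)·q₁ + 5·x₁·p₂ + 10·(1−x₁)·q₂ − 5·x₁·q₁·p₂ − 10·(1−x₁)·q₁·q₂ + (100·(1−x₂) − 50·x₂)·q₃ + 50·x₂·p₄ + 100·(1−x₂)·q₄ − 50·x₂·q₃·p₄ − 100·(1−x₂)·q₃·q₄. Then the supremum over (x₁, x₂) ∈ [0,1] × [0,1] of the infimum, over all finitely supported probability distributions μ on [1/10, 9/10]⁷, of E_μ[u ↦ V_zero(x₁, x₂; u)] equals 24655/348 (i.e., 70 + 295/348). -/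
import Mathlib


/-- A finitely supported probability distribution on a set `S`. -/
def IsFinProbDist {α : Type*} (S : Set α) (μ : α →₀ ℝ) : Prop :=
  (∀ u, 0 ≤ μ u) ∧ ↑μ.support ⊆ S ∧ (∑ u ∈ μ.support, μ u) = 1

/-- Expectation of `g` under a finitely supported distribution `μ`. -/
noncomputable def expect {α : Type*} (μ : α →₀ ℝ) (g : α → ℝ) : ℝ :=
  ∑ u ∈ μ.support, μ u * g u

/-- Value function of the zero-stickiness, nature-first interpretation, with nature's
seven relevant coordinates `(p₁, q₁, p₂, q₂, q₃, p₄, q₄)`. -/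
noncomputable def VZero (x₁ x₂ p₁ q₁ p₂ q₂ q₃ p₄ q₄ : ℝ) : ℝ :=
  45 * (1 - x₁) + 5 * x₁ + 50 * x₂
    + (90 * x₁ - 45 * (1 - x₁)) * p₁
    + (10 * (1 - x₁) - 5 * x₁) * q₁
    + 5 * x₁ * p₂
    + 10 * (1 - x₁) * q₂
    - 5 * x₁ * (q₁ * p₂)
    - 10 * (1 - x₁) * (q₁ * q₂)
    + (100 * (1 - x₂) - 50 * x₂) * q₃
    + 50 * x₂ * p₄
    + 100 * (1 - x₂) * q₄
    - 50 * x₂ * (q₃ * p₄)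
    - 100 * (1 - x₂) * (q₃ * q₄)

/-! ### Auxiliary machinery -/

lemma expect_eq_sum {α : Type*} (μ : α →₀ ℝ) (g : α → ℝ) :
    expect μ g = μ.sum (fun u v => v * g u) := rfl

lemma expect_add {α : Type*} (μ ν : α →₀ ℝ) (g : α → ℝ) :
    expect (μ + ν) g = expect μ g + expect ν g := by
  simp only [expect_eq_sum]
  exact Finsupp.sum_add_index' (fun u => zero_mul _) (fun u v₁ v₂ => add_mul _ _ _)

lemma expect_single {α : Type*} (a : α) (w : ℝ) (g : α → ℝ) :
    expect (Finsupp.single a w) g = w * g a := by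
  simp only [expect_eq_sum]
  exact Finsupp.sum_single_index (zero_mul _)

lemma weight_eq_sum {α : Type*} (μ : α →₀ ℝ) :
    (∑ u ∈ μ.support, μ u) = μ.sum (fun _ v => v) := rfl

lemma weight_add {α : Type*} (μ ν : α →₀ ℝ) :
    (∑ u ∈ (μ + ν).support, (μ + ν) u)
      = (∑ u ∈ μ.support, μ u) + (∑ u ∈ ν.support, ν u) := by
  simp only [weight_eq_sum]
  exact Finsupp.sum_add_index' (fun u => rfl) (fun u v₁ v₂ => rfl)

lemma weight_single {α : Type*} (a : α) (w : ℝ) :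
    (∑ u ∈ (Finsupp.single a w).support, (Finsupp.single a w) u) = w := by
  simp only [weight_eq_sum]
  exact Finsupp.sum_single_index rfl

/-- Nature's pure choice with `p₁ = a`, `q₃ = b`, all other coordinates `1/10`. -/
noncomputable def natPt (a b : ℝ) : Fin 7 → ℝ :=
  fun i => if i = 0 then a else if i = 4 then b else 1/10

lemma natPt_mem {a b : ℝ} (ha : a ∈ Set.Icc (1/10 : ℝ) (9/10))
    (hb : b ∈ Set.Icc (1/10 : ℝ) (9/10)) :
    natPt a b ∈ {u : Fin 7 → ℝ | ∀ i, u i ∈ Set.Icc (1/10 : ℝ) (9/10)} := by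
  intro i
  fin_cases i <;> simp (config := { decide := true }) only [natPt] <;>
    first
      | exact ha
      | exact hb
      | exact ⟨le_refl _, by norm_num⟩

/-- Nature's optimal mixed strategy. -/
noncomputable def natMix : (Fin 7 → ℝ) →₀ ℝ :=
  Finsupp.single (natPt (1/10) (1/10)) (272061/501120)
    + Finsupp.single (natPt (1/10) (9/10)) (97051/501120)
    + Finsupp.single (natPt (9/10) (1/10)) (97299/501120)
    + Finsupp.single (natPt (9/10) (9/10)) (34709/501120)

lemma natMix_prob :
    IsFinProbDist {u : Fin 7 → ℝ | ∀ i, u i ∈ Set.Icc (1/10 : ℝ) (9/10)} natMix := by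
  refine ⟨?_, ?_, ?_⟩
  · intro u
    simp only [natMix, Finsupp.add_apply, Finsupp.single_apply]
    split_ifs <;> norm_num
  · intro u hu
    rw [Finset.mem_coe, Finsupp.mem_support_iff] at hu
    by_cases h1 : natPt (1/10) (1/10) = u
    · exact h1 ▸ natPt_mem (by norm_num) (by norm_num)
    by_cases h2 : natPt (1/10) (9/10) = u
    · exact h2 ▸ natPt_mem (by norm_num) (by norm_num)
    by_cases h3 : natPt (9/10) (1/10) = u
    · exact h3 ▸ natPt_mem (by norm_num) (by norm_num)
    by_cases h4 : natPt (9/10) (9/10) = u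
    · exact h4 ▸ natPt_mem (by norm_num) (by norm_num)
    exact absurd (by
      simp only [natMix, Finsupp.add_apply, Finsupp.single_apply,
        if_neg h1, if_neg h2, if_neg h3, if_neg h4, add_zero]) hu
  · simp only [natMix]
    rw [weight_add, weight_add, weight_add, weight_single, weight_single,
      weight_single, weight_single]
    norm_num

lemma natMix_expect (x₁ x₂ : ℝ) :
    expect natMix
      (fun u => VZero x₁ x₂ (u 0) (u 1) (u 2) (u 3) (u 4) (u 5) (u 6))
      = 24655 / 348 := by
  simp only [natMix]
  rw [expect_add, expect_add, expect_add, expect_single, expect_single,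
    expect_single, expect_single]
  simp (config := { decide := true }) only [natPt, if_true, if_false]
  simp only [VZero]
  ring

lemma VZero_nonneg {x₁ x₂ : ℝ} (hx₁ : x₁ ∈ Set.Icc (0:ℝ) 1) (hx₂ : x₂ ∈ Set.Icc (0:ℝ) 1)
    {u : Fin 7 → ℝ} (hu : ∀ i, u i ∈ Set.Icc (1/10 : ℝ) (9/10)) :
    0 ≤ VZero x₁ x₂ (u 0) (u 1) (u 2) (u 3) (u 4) (u 5) (u 6) := by
  obtain ⟨hx₁0, hx₁1⟩ := hx₁
  obtain ⟨hx₂0, hx₂1⟩ := hx₂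
  have h0 := hu 0; have h1 := hu 1; have h2 := hu 2; have h3 := hu 3
  have h4 := hu 4; have h5 := hu 5; have h6 := hu 6
  simp only [Set.mem_Icc] at h0 h1 h2 h3 h4 h5 h6
  simp only [VZero]
  nlinarith [mul_nonneg (by linarith : (0:ℝ) ≤ 1 - x₁) (by linarith : (0:ℝ) ≤ 1 - u 0),
    mul_nonneg hx₁0 (by linarith : (0:ℝ) ≤ u 0),
    mul_nonneg (mul_nonneg hx₁0 (by linarith : (0:ℝ) ≤ 1 - u 1)) (by linarith : (0:ℝ) ≤ u 2),
    mul_nonneg (mul_nonneg (by linarith : (0:ℝ) ≤ 1 - x₁) (by linarith : (0:ℝ) ≤ 1 - u 1)) (by linarith : (0:ℝ) ≤ u 3),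
    mul_nonneg hx₁0 (by linarith : (0:ℝ) ≤ 1 - u 1),
    mul_nonneg (by linarith : (0:ℝ) ≤ 1 - x₁) (by linarith : (0:ℝ) ≤ u 1),
    mul_nonneg (by linarith : (0:ℝ) ≤ 1 - x₂) (by linarith : (0:ℝ) ≤ u 4),
    mul_nonneg (mul_nonneg (by linarith : (0:ℝ) ≤ 1 - x₂) (by linarith : (0:ℝ) ≤ 1 - u 4)) (by linarith : (0:ℝ) ≤ u 6),
    mul_nonneg hx₂0 (by linarith : (0:ℝ) ≤ 1 - u 4),
    mul_nonneg (mul_nonneg hx₂0 (by linarith : (0:ℝ) ≤ 1 - u 4)) (by linarith : (0:ℝ) ≤ u 5)]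

lemma VZero_opt {u : Fin 7 → ℝ} (hu : ∀ i, u i ∈ Set.Icc (1/10 : ℝ) (9/10)) :
    24655 / 348 ≤ VZero (1/3) (18/29) (u 0) (u 1) (u 2) (u 3) (u 4) (u 5) (u 6) := by
  have h0 := hu 0; have h1 := hu 1; have h2 := hu 2; have h3 := hu 3
  have h4 := hu 4; have h5 := hu 5; have h6 := hu 6
  simp only [Set.mem_Icc] at h0 h1 h2 h3 h4 h5 h6
  simp only [VZero]
  nlinarith [mul_nonneg (by linarith : (0:ℝ) ≤ 1 - u 1) (by linarith : (0:ℝ) ≤ u 2 - 1/10),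
    mul_nonneg (by linarith : (0:ℝ) ≤ 1 - u 1) (by linarith : (0:ℝ) ≤ u 3 - 1/10),
    mul_nonneg (by linarith : (0:ℝ) ≤ 1 - u 4) (by linarith : (0:ℝ) ≤ u 5 - 1/10),
    mul_nonneg (by linarith : (0:ℝ) ≤ 1 - u 4) (by linarith : (0:ℝ) ≤ u 6 - 1/10),
    h1.1, h4.1]

theorem zeroStickiness_mixed_optimal_value :
    sSup {v : ℝ | ∃ x₁ ∈ Set.Icc (0 : ℝ) 1, ∃ x₂ ∈ Set.Icc (0 : ℝ) 1,
        v = sInf {w : ℝ | ∃ μ : (Fin 7 → ℝ) →₀ ℝ,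
          IsFinProbDist {u : Fin 7 → ℝ | ∀ i, u i ∈ Set.Icc (1/10 : ℝ) (9/10)} μ ∧
          w = expect μ (fun u => VZero x₁ x₂ (u 0) (u 1) (u 2) (u 3) (u 4) (u 5) (u 6))}}
      = 24655 / 348 := by
  set S : Set (Fin 7 → ℝ) := {u : Fin 7 → ℝ | ∀ i, u i ∈ Set.Icc (1/10 : ℝ) (9/10)} with hS
  set W : ℝ → ℝ → Set ℝ := fun x₁ x₂ => {w : ℝ | ∃ μ : (Fin 7 → ℝ) →₀ ℝ,
      IsFinProbDist S μ ∧
      w = expect μ (fun u => VZero x₁ x₂ (u 0) (u 1) (u 2) (u 3) (u 4) (u 5) (u 6))} with hW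
  have hmemW : ∀ x₁ x₂ : ℝ, (24655 / 348 : ℝ) ∈ W x₁ x₂ := fun x₁ x₂ =>
    ⟨natMix, natMix_prob, (natMix_expect x₁ x₂).symm⟩
  have hbdd : ∀ x₁ ∈ Set.Icc (0:ℝ) 1, ∀ x₂ ∈ Set.Icc (0:ℝ) 1, BddBelow (W x₁ x₂) := by
    intro x₁ hx₁ x₂ hx₂
    refine ⟨0, ?_⟩
    rintro w ⟨μ, ⟨hpos, hsupp, -⟩, rfl⟩
    refine Finset.sum_nonneg fun u hu => mul_nonneg (hpos u) ?_
    exact VZero_nonneg hx₁ hx₂ (hsupp hu)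
  have hub : ∀ v ∈ {v : ℝ | ∃ x₁ ∈ Set.Icc (0 : ℝ) 1, ∃ x₂ ∈ Set.Icc (0 : ℝ) 1,
      v = sInf (W x₁ x₂)}, v ≤ 24655 / 348 := by
    rintro v ⟨x₁, hx₁, x₂, hx₂, rfl⟩
    exact csInf_le (hbdd x₁ hx₁ x₂ hx₂) (hmemW x₁ x₂)
  have hlb : ∀ w ∈ W (1/3) (18/29), (24655 / 348 : ℝ) ≤ w := by
    rintro w ⟨μ, ⟨hpos, hsupp, hsum⟩, rfl⟩
    calc (24655 / 348 : ℝ) = ∑ u ∈ μ.support, μ u * (24655 / 348) := by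
          rw [← Finset.sum_mul, hsum, one_mul]
    _ ≤ ∑ u ∈ μ.support, μ u
          * VZero (1/3) (18/29) (u 0) (u 1) (u 2) (u 3) (u 4) (u 5) (u 6) :=
        Finset.sum_le_sum fun u hu =>
          mul_le_mul_of_nonneg_left (VZero_opt (hsupp hu)) (hpos u)
    _ = expect μ _ := rfl
  have hval : sInf (W (1/3) (18/29)) = 24655 / 348 := by
    refine le_antisymm
      (csInf_le (hbdd (1/3) (by norm_num) (18/29) (by norm_num)) (hmemW _ _))
      (le_csInf ⟨_, hmemW (1/3) (18/29)⟩ hlb)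
  have hmemT : (24655 / 348 : ℝ) ∈ {v : ℝ | ∃ x₁ ∈ Set.Icc (0 : ℝ) 1,
      ∃ x₂ ∈ Set.Icc (0 : ℝ) 1, v = sInf (W x₁ x₂)} :=
    ⟨1/3, by norm_num, 18/29, by norm_num, hval.symm⟩
  exact le_antisymm (csSup_le ⟨_, hmemT⟩ hub) (le_csSup ⟨_, hub⟩ hmemT)
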